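/- For every ε > 0 there exist β > 0 and constants such that the Tychonoff-type solution u(t,x) on the integer line graph, defined via g(t) = exp(−t^{−β}), satisfies for each fixed t the bound |u(t,x)| ≤ exp[(2 + 2/β)·x·ln x + O(x)] as x → +∞; consequently, choosing β > 2/ε gives lim_{x→∞} |u(t,x)|·exp(−(2+ε)·x·ln x) = 0. -/

import Mathlib

noncomputable def gfun (β : ℝ) (t : ℝ) : ℝ :=
  if 0 < t then Real.exp (-(t ^ (-β))) else 0

noncomputable def consecProd (x : ℤ) (k : ℕ) : ℝ :=
  ∏ j ∈ Finset.range (2 * k), ((x + k - j : ℤ) : ℝ)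

noncomputable def uline (β : ℝ) (t : ℝ) (x : ℤ) : ℝ :=
  gfun β t + ∑' k : ℕ,
    iteratedDeriv (2 * (k + 1)) (gfun β) t / (Nat.factorial (2 * (k + 1))) *
      consecProd (if 0 ≤ x then x else -x - 1) (k + 1)

/-! Take β = n odd, so that `gfun n = expNegInvGlue ∘ (· ^ n)` is smooth. On t > 0,
`g⁽ᵐ⁾(t) = ∑ⱼ derivCoeff n m j · e^{-t^{-n}} t^{-(jn+m)}` with
`|derivCoeff n m j| · j! ≤ n^j (n+2)^m m!`, and `e^{-y} y^b ≤ b!` turns this into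
`|g⁽ᵐ⁾| ≤ 2 (m+1) (n(n+2))^m m! (m+q)^q` with `q = m/n + 1`, a real-variable substitute for
John's estimate; it persists at t = 0 by continuity. For x ≥ 1 the series for `u(t,x)` stops at
k = x because `consecProd x k` vanishes for k > x, and each remaining term is at most
`(C x)^(2x + 2x/n + 2)`, so `ln |u(t,x)| ≤ (2 + 2/n) x ln x + O(x)`. Once `2/n < ε`, the exponent
`(2/n - ε) x ln x + O(x)` of `|u(t,x)| e^{-(2+ε) x ln x}` tends to `-∞`. -/

open Real Filter Finset Topology
open scoped Nat ContDiff

noncomputable def derivCoeff (n : ℕ) : ℕ → ℕ → ℝ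
  | 0, 0 => 1
  | 0, _ + 1 => 0
  | m + 1, 0 => -(m * derivCoeff n m 0)
  | m + 1, j + 1 => n * derivCoeff n m j - ((j + 1) * n + m : ℕ) * derivCoeff n m (j + 1)

theorem derivCoeff_eq_zero_of_lt (n : ℕ) : ∀ {m j : ℕ}, m < j → derivCoeff n m j = 0
  | 0, j + 1, _ => rfl
  | m + 1, j + 1, h => by
    simp only [derivCoeff, derivCoeff_eq_zero_of_lt n (by omega : m < j),
      derivCoeff_eq_zero_of_lt n (by omega : m < j + 1), mul_zero, sub_zero]

theorem sum_range_derivCoeff_succ_mul (n m : ℕ) (ψ : ℕ → ℝ) :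
    ∑ j ∈ range (m + 2), derivCoeff n (m + 1) j * ψ j =
      ∑ j ∈ range (m + 1), derivCoeff n m j * (n * ψ (j + 1) - (j * n + m : ℕ) * ψ j) := by
  have shift : ∑ j ∈ range (m + 1), derivCoeff n m j * ((j * n + m : ℕ) * ψ j) =
      ∑ j ∈ range (m + 1), ((j + 1) * n + m : ℕ) * derivCoeff n m (j + 1) * ψ (j + 1) +
        m * derivCoeff n m 0 * ψ 0 := by
    rw [sum_range_succ', sum_range_succ _ m, derivCoeff_eq_zero_of_lt n (Nat.lt_succ_self m)]
    simp only [zero_mul, mul_zero, add_zero]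
    congr 1
    · exact sum_congr rfl fun j _ => by ring
    · push_cast; ring
  rw [sum_range_succ']
  simp only [derivCoeff, mul_sub, sum_sub_distrib, shift, sub_mul]
  rw [show ∑ j ∈ range (m + 1), derivCoeff n m j * (n * ψ (j + 1)) =
      ∑ j ∈ range (m + 1), n * derivCoeff n m j * ψ (j + 1) from
    sum_congr rfl fun j _ => by ring]
  ring

theorem abs_derivCoeff_mul_factorial_le (n : ℕ) :
    ∀ m j, |derivCoeff n m j| * j ! ≤ (n : ℝ) ^ j * (n + 2) ^ m * m ! := by
  intro m
  induction m with
  | zero => rintro (_ | j) <;> simp [derivCoeff]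
  | succ m ih =>
    rintro (_ | j)
    · have h := ih 0
      simp only [derivCoeff, abs_neg, abs_mul, Nat.abs_cast, Nat.factorial_zero, Nat.cast_one,
        mul_one, pow_zero, one_mul] at h ⊢
      have hm : (m : ℝ) ≤ (n + 2) * (m + 1) := by nlinarith [(n.cast_nonneg : (0 : ℝ) ≤ n)]
      calc (m : ℝ) * |derivCoeff n m 0| ≤ (n + 2) * (m + 1) * ((n + 2) ^ m * m !) := by gcongr
        _ = (n + 2) ^ (m + 1) * (m + 1)! := by
          rw [pow_succ, Nat.factorial_succ]; push_cast; ring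
    rcases lt_or_ge m j with hmj | hjm
    · rw [derivCoeff_eq_zero_of_lt n (by omega : m + 1 < j + 1), abs_zero, zero_mul]
      positivity
    have h₁ := ih j
    have h₂ := ih (j + 1)
    have hj : (j : ℝ) ≤ m := by exact_mod_cast hjm
    calc |derivCoeff n (m + 1) (j + 1)| * (j + 1)!
        ≤ (n * |derivCoeff n m j| + ((j + 1) * n + m) * |derivCoeff n m (j + 1)|) *
            (j + 1)! := by
          gcongr
          simp only [derivCoeff]
          refine (abs_sub _ _).trans_eq ?_
          simp only [abs_mul, Nat.abs_cast]
          push_cast; ring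
      _ = n * (j + 1) * (|derivCoeff n m j| * j !) +
            ((j + 1) * n + m) * (|derivCoeff n m (j + 1)| * (j + 1)!) := by
          rw [Nat.factorial_succ]; push_cast; ring
      _ ≤ n * (j + 1) * (n ^ j * (n + 2) ^ m * m !) +
            ((j + 1) * n + m) * (n ^ (j + 1) * (n + 2) ^ m * m !) := by gcongr
      _ = n ^ (j + 1) * ((n + 2) ^ m * m !) * ((j + 1) * (n + 1) + m) := by ring
      _ ≤ n ^ (j + 1) * ((n + 2) ^ m * m !) * ((n + 2) * (m + 1)) := by gcongr; nlinarith
      _ = n ^ (j + 1) * (n + 2) ^ (m + 1) * (m + 1)! := by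
          rw [pow_succ, Nat.factorial_succ]; push_cast; ring

noncomputable def expNegZpowMul (n a : ℕ) (t : ℝ) : ℝ :=
  exp (-t ^ (-(n : ℤ))) * t ^ (-(a : ℤ))

theorem hasDerivAt_expNegZpowMul (n a : ℕ) {t : ℝ} (ht : t ≠ 0) :
    HasDerivAt (expNegZpowMul n a)
      (n * expNegZpowMul n (a + n + 1) t - a * expNegZpowMul n (a + 1) t) t := by
  have hexp := (hasDerivAt_zpow (-(n : ℤ)) t (.inl ht)).fun_neg.exp
  have hpow := hasDerivAt_zpow (-(a : ℤ)) t (.inl ht)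
  refine (hexp.mul hpow).congr_deriv ?_
  simp only [expNegZpowMul]
  have e₁ : (-((a + n + 1 : ℕ) : ℤ)) = (-(n : ℤ) - 1) + -(a : ℤ) := by push_cast; ring
  have e₂ : (-((a + 1 : ℕ) : ℤ)) = -(a : ℤ) - 1 := by push_cast; ring
  rw [e₁, e₂, zpow_add₀ ht]
  push_cast
  ring

noncomputable def gfunDeriv (n m : ℕ) (t : ℝ) : ℝ :=
  ∑ j ∈ range (m + 1), derivCoeff n m j * expNegZpowMul n (j * n + m) t

theorem hasDerivAt_gfunDeriv (n m : ℕ) {t : ℝ} (ht : t ≠ 0) :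
    HasDerivAt (gfunDeriv n m) (gfunDeriv n (m + 1) t) t := by
  have h := HasDerivAt.fun_sum fun j (_ : j ∈ range (m + 1)) =>
    (hasDerivAt_expNegZpowMul n (j * n + m) ht).const_mul (derivCoeff n m j)
  refine h.congr_deriv ?_
  rw [gfunDeriv,
    sum_range_derivCoeff_succ_mul n m fun j => expNegZpowMul n (j * n + (m + 1)) t]
  refine sum_congr rfl fun j _ => ?_
  rw [show (j + 1) * n + (m + 1) = j * n + m + n + 1 by ring]
  rfl

theorem gfun_natCast_of_pos (n : ℕ) {t : ℝ} (ht : 0 < t) :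
    gfun n t = exp (-t ^ (-(n : ℤ))) := by
  rw [gfun, if_pos ht, ← Real.rpow_intCast]
  push_cast
  rfl

theorem iteratedDeriv_gfun_of_pos (n m : ℕ) {t : ℝ} (ht : 0 < t) :
    iteratedDeriv m (gfun n) t = gfunDeriv n m t := by
  induction m generalizing t with
  | zero => simp [gfun_natCast_of_pos n ht, gfunDeriv, expNegZpowMul, derivCoeff]
  | succ m ih =>
    have hloc : iteratedDeriv m (gfun n) =ᶠ[𝓝 t] gfunDeriv n m :=
      eventually_of_mem (Ioi_mem_nhds ht) fun s hs => ih hs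
    rw [iteratedDeriv_succ, hloc.deriv_eq, (hasDerivAt_gfunDeriv n m ht.ne').deriv]

theorem iteratedDeriv_gfun_of_neg (β : ℝ) (m : ℕ) {t : ℝ} (ht : t < 0) :
    iteratedDeriv m (gfun β) t = 0 := by
  induction m generalizing t with
  | zero => simp [gfun, ht.not_gt]
  | succ m ih =>
    have hloc : iteratedDeriv m (gfun β) =ᶠ[𝓝 t] fun _ => 0 :=
      eventually_of_mem (Iio_mem_nhds ht) fun s hs => ih hs
    rw [iteratedDeriv_succ, hloc.deriv_eq, deriv_const]

theorem gfun_natCast_eq_comp_pow {n : ℕ} (hn : Odd n) :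
    gfun n = fun t => expNegInvGlue (t ^ n) := by
  funext t
  rcases lt_or_ge 0 t with ht | ht
  · rw [gfun_natCast_of_pos n ht, expNegInvGlue, if_neg (pow_pos ht n).not_ge, zpow_neg,
      zpow_natCast]
  · rw [gfun, if_neg ht.not_gt, expNegInvGlue.zero_of_nonpos (hn.pow_nonpos ht)]

theorem contDiff_gfun {n : ℕ} (hn : Odd n) : ContDiff ℝ ∞ (gfun n) := by
  rw [gfun_natCast_eq_comp_pow hn]
  exact expNegInvGlue.contDiff.comp (contDiff_id.pow n)

theorem pow_le_one_add_pow {s : ℝ} (hs : 0 ≤ s) {a b : ℕ} (hab : a ≤ b) :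
    s ^ a ≤ 1 + s ^ b := by
  rcases le_total s 1 with h | h
  · linarith [pow_le_one₀ (n := a) hs h, pow_nonneg hs b]
  · linarith [pow_le_pow_right₀ h hab]

theorem exp_neg_mul_pow_le_factorial {y : ℝ} (hy : 0 ≤ y) (b : ℕ) :
    exp (-y) * y ^ b ≤ b ! := by
  rw [exp_neg, inv_mul_le_iff₀ (exp_pos y), ← div_le_iff₀ (by positivity)]
  exact pow_div_factorial_le_exp y hy b

theorem expNegZpowMul_nonneg (n a : ℕ) {t : ℝ} (ht : 0 < t) : 0 ≤ expNegZpowMul n a t := by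
  unfold expNegZpowMul; positivity

theorem expNegZpowMul_le {n a b : ℕ} (hab : a ≤ n * b) {t : ℝ} (ht : 0 < t) :
    expNegZpowMul n a t ≤ 1 + b ! := by
  set y := t ^ (-(n : ℤ)) with hy
  have hy0 : 0 ≤ y := by positivity
  have hpow : t ^ (-(a : ℤ)) ≤ 1 + y ^ b := by
    simp only [hy, zpow_neg, zpow_natCast, ← inv_pow, ← pow_mul]
    exact pow_le_one_add_pow (by positivity) hab
  calc exp (-y) * t ^ (-(a : ℤ)) ≤ exp (-y) * (1 + y ^ b) := by gcongr
    _ = exp (-y) + exp (-y) * y ^ b := by ring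
    _ ≤ 1 + b ! := add_le_add (exp_le_one_iff.2 (neg_nonpos.2 hy0))
        (exp_neg_mul_pow_le_factorial hy0 b)

theorem factorial_add_le_factorial_mul_pow (j q : ℕ) : (j + q)! ≤ j ! * (j + q) ^ q := by
  rw [← Nat.factorial_mul_ascFactorial]
  exact Nat.mul_le_mul_left _ (Nat.ascFactorial_le_pow_add j q)

theorem abs_gfunDeriv_le {n : ℕ} (hn : 1 ≤ n) (m : ℕ) {t : ℝ} (ht : 0 < t) :
    |gfunDeriv n m t| ≤
      2 * (m + 1) * (n * (n + 2)) ^ m * m ! * (m + (m / n + 1) : ℕ) ^ (m / n + 1) := by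
  set q := m / n + 1 with hq
  have hterm : ∀ j ∈ range (m + 1), |derivCoeff n m j * expNegZpowMul n (j * n + m) t| ≤
      2 * (n * (n + 2)) ^ m * m ! * (m + q : ℕ) ^ q := by
    intro j hj
    have hjm : j ≤ m := Nat.lt_succ_iff.1 (mem_range.1 hj)
    have hidx : j * n + m ≤ n * (j + q) := by
      have := Nat.lt_mul_div_succ m (by omega : 0 < n)
      rw [hq]; nlinarith
    have hfac : (1 + (j + q)! : ℝ) ≤ 2 * (j ! * (m + q : ℕ) ^ q) := by
      have h₁ : ((j + q)! : ℝ) ≤ j ! * (m + q : ℕ) ^ q := by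
        exact_mod_cast (factorial_add_le_factorial_mul_pow j q).trans (by gcongr)
      have h₂ : (1 : ℝ) ≤ (j + q)! := by exact_mod_cast (j + q).factorial_pos
      linarith
    have hc : |derivCoeff n m j| * j ! ≤ (n : ℝ) ^ m * (n + 2) ^ m * m ! :=
      (abs_derivCoeff_mul_factorial_le n m j).trans
        (by gcongr; exact_mod_cast hn)
    rw [abs_mul, abs_of_nonneg (expNegZpowMul_nonneg n _ ht)]
    calc |derivCoeff n m j| * expNegZpowMul n (j * n + m) t
        ≤ |derivCoeff n m j| * (2 * (j ! * (m + q : ℕ) ^ q)) := by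
          gcongr; exact (expNegZpowMul_le hidx ht).trans hfac
      _ = 2 * (|derivCoeff n m j| * j !) * (m + q : ℕ) ^ q := by ring
      _ ≤ 2 * (n ^ m * (n + 2) ^ m * m !) * (m + q : ℕ) ^ q := by
          gcongr
      _ = 2 * (n * (n + 2)) ^ m * m ! * (m + q : ℕ) ^ q := by rw [mul_pow]; ring
  calc |gfunDeriv n m t|
        ≤ ∑ j ∈ range (m + 1), (2 : ℝ) * (n * (n + 2)) ^ m * m ! * (m + q : ℕ) ^ q :=
        (abs_sum_le_sum_abs _ _).trans (sum_le_sum hterm)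
    _ = _ := by rw [sum_const, card_range, nsmul_eq_mul]; push_cast; ring

theorem abs_iteratedDeriv_gfun_le {n : ℕ} (hn : Odd n) (m : ℕ) (t : ℝ) :
    |iteratedDeriv m (gfun n) t| ≤
      2 * (m + 1) * (n * (n + 2)) ^ m * m ! * (m + (m / n + 1) : ℕ) ^ (m / n + 1) := by
  have hbound : ∀ s ≠ 0, |iteratedDeriv m (gfun n) s| ≤
      2 * (m + 1) * (n * (n + 2)) ^ m * m ! * (m + (m / n + 1) : ℕ) ^ (m / n + 1) := by
    intro s hs
    rcases hs.lt_or_gt with hs | hs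
    · rw [iteratedDeriv_gfun_of_neg _ m hs, abs_zero]; positivity
    · rw [iteratedDeriv_gfun_of_pos n m hs]; exact abs_gfunDeriv_le hn.pos m hs
  rcases eq_or_ne t 0 with rfl | ht
  · have hcont :=
      ((contDiff_gfun hn).continuous_iteratedDeriv m (by exact_mod_cast le_top)).abs
    exact le_of_tendsto ((hcont.tendsto 0).mono_left (nhdsWithin_le_nhds (s := {0}ᶜ)))
      (eventually_nhdsWithin_of_forall hbound)
  · exact hbound t ht

theorem consecProd_eq_zero {x : ℤ} (hx : 0 ≤ x) {k : ℕ} (hk : x < k) :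
    consecProd x k = 0 := by
  refine prod_eq_zero (i := (x + k).toNat) (mem_range.2 (by omega)) ?_
  rw [Int.toNat_of_nonneg (by omega)]
  simp

theorem abs_consecProd_le {x : ℤ} {k : ℕ} (hk : k ≤ x) :
    |consecProd x k| ≤ (2 * x) ^ (2 * k) := by
  rw [consecProd, abs_prod]
  refine (prod_le_prod (fun _ _ => abs_nonneg _) fun j hj => ?_).trans_eq
    (by rw [prod_const, card_range])
  have hj := mem_range.1 hj
  rw [← Int.cast_abs, ← Int.cast_ofNat, ← Int.cast_mul, Int.cast_le, abs_le]
  omega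

theorem uline_natCast (β t : ℝ) (X : ℕ) :
    uline β t X = gfun β t + ∑ k ∈ range X,
      iteratedDeriv (2 * (k + 1)) (gfun β) t / (2 * (k + 1))! * consecProd X (k + 1) := by
  rw [uline, if_pos (Nat.cast_nonneg X), tsum_eq_sum]
  intro k hk
  rw [consecProd_eq_zero (Nat.cast_nonneg X) (by simp at hk; omega), mul_zero]

theorem abs_iteratedDeriv_gfun_div_factorial_mul_le {n : ℕ} (hn : Odd n) {X m : ℕ}
    (hX : 1 ≤ X) (hm : m ≤ 2 * X) (t : ℝ) :
    |iteratedDeriv m (gfun n) t| / m ! * (2 * X) ^ m ≤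
      (10 * n * (n + 2) * X) ^ (2 * X + 2 * X / n + 2) := by
  set q := m / n + 1 with hq
  have hn1 : (1 : ℝ) ≤ n := by exact_mod_cast hn.pos
  have hX1 : (1 : ℝ) ≤ X := by exact_mod_cast hX
  have hmR : (m : ℝ) ≤ 2 * X := by exact_mod_cast hm
  have hqm : q ≤ m + 1 := by have := Nat.div_le_self m n; omega
  have hqR : (q : ℝ) ≤ m + 1 := by exact_mod_cast hqm
  have hC : (30 : ℝ) * X ≤ 10 * n * (n + 2) * X := by
    have : (3 : ℝ) ≤ n * (n + 2) := by nlinarith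
    nlinarith
  have hCX : (1 : ℝ) ≤ 10 * n * (n + 2) * X := by linarith
  have hexp : m + q + 1 ≤ 2 * X + 2 * X / n + 2 := by
    have := Nat.div_le_div_right (c := n) hm; omega
  calc |iteratedDeriv m (gfun n) t| / m ! * (2 * X) ^ m
      ≤ 2 * (m + 1) * (n * (n + 2)) ^ m * m ! * (m + q : ℕ) ^ q / m ! * (2 * X) ^ m := by
        gcongr; exact abs_iteratedDeriv_gfun_le hn m t
    _ = 2 * (m + 1) * (2 * n * (n + 2) * X) ^ m * (m + q : ℕ) ^ q := by
        field_simp; rw [mul_pow, mul_pow, mul_pow, mul_pow]; ring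
    _ ≤ (10 * n * (n + 2) * X) * (10 * n * (n + 2) * X) ^ m * (10 * n * (n + 2) * X) ^ q := by
        gcongr ?_ * ?_ ^ _ * ?_ ^ _
        · linarith
        · nlinarith
        · push_cast; linarith
    _ = (10 * n * (n + 2) * X) ^ (m + q + 1) := by ring
    _ ≤ _ := pow_le_pow_right₀ hCX hexp

theorem abs_gfun_le_one (β t : ℝ) : |gfun β t| ≤ 1 := by
  unfold gfun
  split_ifs with ht
  · rw [abs_of_pos (exp_pos _), exp_le_one_iff, neg_nonpos]
    exact (rpow_pos_of_pos ht _).le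
  · simp

theorem abs_uline_le_pow {n : ℕ} (hn : Odd n) (t : ℝ) {X : ℕ} (hX : 1 ≤ X) :
    |uline n t X| ≤ (10 * n * (n + 2) * X) ^ (2 * X + 2 * X / n + 4) := by
  set A : ℝ := 10 * n * (n + 2) * X with hA
  set N := 2 * X + 2 * X / n + 2
  have hterm : ∀ k ∈ range X,
      |iteratedDeriv (2 * (k + 1)) (gfun n) t / (2 * (k + 1))! * consecProd X (k + 1)| ≤
        A ^ N := by
    intro k hk
    have hk := mem_range.1 hk
    rw [abs_mul, abs_div, Nat.abs_cast]
    calc _ ≤ |iteratedDeriv (2 * (k + 1)) (gfun n) t| / (2 * (k + 1))! *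
            (2 * X) ^ (2 * (k + 1)) := by
          gcongr; simpa using abs_consecProd_le (x := X) (k := k + 1) (by omega)
      _ ≤ A ^ N := abs_iteratedDeriv_gfun_div_factorial_mul_le hn hX (by omega) t
  have hX1 : (1 : ℝ) ≤ X := by exact_mod_cast hX
  have hn1 : (1 : ℝ) ≤ n := by exact_mod_cast hn.pos
  have hAX : 2 * (X : ℝ) ≤ A := by
    have : (3 : ℝ) ≤ n * (n + 2) := by nlinarith
    nlinarith
  have hA1 : 1 ≤ A := by linarith
  rw [uline_natCast]
  calc _ ≤ |gfun n t| + ∑ k ∈ range X,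
          |iteratedDeriv (2 * (k + 1)) (gfun n) t / (2 * (k + 1))! * consecProd X (k + 1)| :=
        (abs_add_le _ _).trans (by gcongr; exact abs_sum_le_sum_abs _ _)
    _ ≤ 1 + X * A ^ N := by
        gcongr
        · exact abs_gfun_le_one _ _
        · exact (sum_le_sum hterm).trans_eq (by rw [sum_const, card_range, nsmul_eq_mul])
    _ ≤ A ^ (N + 1) + A ^ (N + 1) := by
        gcongr
        · exact one_le_pow₀ hA1
        · rw [pow_succ' A N]
          exact mul_le_mul_of_nonneg_right (by linarith : (X : ℝ) ≤ A) (by positivity)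
    _ ≤ A ^ (N + 2) := by rw [pow_succ _ (N + 1)]; nlinarith [one_le_pow₀ (n := N + 1) hA1]

theorem pow_le_exp_mul_log {C X : ℝ} (hC : 1 ≤ C) (hX : 1 ≤ X) {b c : ℝ} (hc : 0 ≤ c)
    {M : ℕ} (hM : M ≤ b * X + c) :
    (C * X) ^ M ≤ exp (b * X * log X + (c + (b + c) * log C) * X) := by
  have hlogC := log_nonneg hC
  have hlogX := log_nonneg hX
  have hlogX_le : log X ≤ X := (log_le_sub_one_of_pos (by linarith)).trans (by linarith)
  rw [← exp_log (pow_pos (by positivity) M), log_pow, log_mul (by positivity) (by positivity)]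
  refine exp_le_exp.2 ?_
  nlinarith [mul_le_mul_of_nonneg_right hM hlogX, mul_le_mul_of_nonneg_right hM hlogC,
    mul_le_mul_of_nonneg_left hlogX_le hc, mul_le_mul_of_nonneg_right hX (mul_nonneg hc hlogC)]

theorem exists_abs_uline_le_exp {n : ℕ} (hn : Odd n) :
    ∃ K : ℝ, ∀ t : ℝ, ∀ X : ℕ, 1 ≤ X →
      |uline n t X| ≤ exp ((2 + 2 / n) * X * log X + K * X) := by
  refine ⟨4 + (2 + 2 / n + 4) * log (10 * n * (n + 2)), fun t X hX => ?_⟩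
  refine (abs_uline_le_pow hn t hX).trans (pow_le_exp_mul_log ?_ (by exact_mod_cast hX)
    (by norm_num) ?_)
  · have : (1 : ℝ) ≤ n := by exact_mod_cast hn.pos
    nlinarith
  · push_cast
    have := Nat.cast_div_le (α := ℝ) (m := 2 * X) (n := n)
    push_cast at this
    have : (2 * X / n : ℝ) = 2 / n * X := by ring
    linarith

theorem tendsto_mul_mul_log_add_mul_atBot {a : ℝ} (ha : a < 0) (K : ℝ) :
    Tendsto (fun x : ℝ => a * x * log x + K * x) atTop atBot := by
  have h : Tendsto (fun x => a * log x + K) atTop atBot :=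
    tendsto_atBot_add_const_right _ K (tendsto_log_atTop.const_mul_atTop_of_neg ha)
  exact (tendsto_id.atTop_mul_atBot₀ h).congr fun x => by simp only [id]; ring

theorem tendsto_abs_mul_exp_neg_mul_log {f : ℤ → ℝ} {a b K : ℝ} (hab : a < b)
    (hf : ∀ᶠ x : ℤ in atTop, |f x| ≤ exp (a * x * log x + K * x)) :
    Tendsto (fun x : ℤ => |f x| * exp (-b * x * log x)) atTop (𝓝 0) := by
  have hlim := tendsto_exp_atBot.comp
    ((tendsto_mul_mul_log_add_mul_atBot (sub_neg.2 hab) K).comp tendsto_intCast_atTop_atTop)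
  refine squeeze_zero' (Eventually.of_forall fun x => by positivity) ?_ hlim
  filter_upwards [hf] with x hx
  calc |f x| * exp (-b * x * log x)
      ≤ exp (a * x * log x + K * x) * exp (-b * x * log x) := by gcongr
    _ = exp ((a - b) * x * log x + K * x) := by rw [← exp_add]; ring_nf

/-- for every `ε > 0` one can choose `β > 2/ε` so that the Tychonoff-type
solution `u` built from `g(t) = exp(−t^{−β})` satisfies, uniformly in `t`,
`|u(t,x)| ≤ exp[(2 + 2/β)·x·ln x + O(x)]` as `x → +∞`; consequently
`|u(t,x)|·exp(−(2+ε)·x·ln x) → 0` as `x → ∞`. -/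
theorem uline_growth_estimate (ε : ℝ) (hε : 0 < ε) :
    ∃ β : ℝ, 0 < β ∧ 2 / ε < β ∧
      (∃ K : ℝ, ∀ t : ℝ, ∀ᶠ x : ℤ in Filter.atTop,
        |uline β t x| ≤
          Real.exp ((2 + 2 / β) * (x : ℝ) * Real.log (x : ℝ) + K * (x : ℝ))) ∧
      ∀ t : ℝ, Filter.Tendsto
        (fun x : ℤ => |uline β t x| *
          Real.exp (-(2 + ε) * (x : ℝ) * Real.log (x : ℝ)))
        Filter.atTop (nhds 0) := by
  set n := 2 * ⌈2 / ε⌉₊ + 1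
  have hn : Odd n := odd_two_mul_add_one _
  have hβ : 2 / ε < n := (Nat.le_ceil _).trans_lt (by simp only [n]; push_cast; linarith)
  obtain ⟨K, hK⟩ := exists_abs_uline_le_exp hn
  have hbound : ∀ t, ∀ᶠ x : ℤ in atTop,
      |uline n t x| ≤ exp ((2 + 2 / n) * x * log x + K * x) := by
    intro t
    filter_upwards [eventually_ge_atTop 1] with x hx
    lift x to ℕ using (by omega)
    exact_mod_cast hK t x (by omega)
  refine ⟨n, by positivity, hβ, ⟨K, hbound⟩,
    fun t => tendsto_abs_mul_exp_neg_mul_log ?_ (hbound t)⟩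
  linarith [(div_lt_comm₀ hε (by positivity)).1 hβ]
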